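/- Fix a positive integer r and nonnegative integers U, V, W. Then ∑_{A} ∑_{B} ∑_{C} ∏_{i=1}^r (A_i + B_i + C_i + 1)! ≤ 2^(8r+9)·(U + V + W + 1)!, where A, B, C range over all r-tuples of nonnegative integers summing to U, V, W respectively. -/

import Mathlib

/-!
Splitting off one coordinate at a time reduces the bound to a two-term estimate: for
`F(W) = ∑_{c + w = W} (a + c + 1)! (b + w + 1)!` one has
`(a + b + 1)! F(W) ≤ 6 (a + 1)! (b + 1)! (a + b + W + 1)!`.
Adding the two ways of peeling an endpoint off the antidiagonal `c + w = W + 1` gives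
`2 F(W + 1) = E + (a + b + W + 4) F(W)`, with endpoint terms `E` controlled by comparing ascending
factorials, and the estimate follows by induction on `W`. Over all coordinates this yields
`(|d| + 1)! ∑_C ∏ (d i + C i + 1)! ≤ 6 ^ r (|d| + W + 1)! ∏ (d i + 1)!`; applying it to the sums
over `C`, `B` and `A` in turn bounds the triple sum by `216 ^ r (U + V + W + 1)!`.
-/

open Nat Finset

theorem factorial_mul_factorial_add_le {m n : ℕ} (h : m ≤ n) (k : ℕ) :
    n ! * (m + k)! ≤ m ! * (n + k)! := by
  rw [← factorial_mul_ascFactorial m k, ← factorial_mul_ascFactorial n k, mul_left_comm]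
  gcongr

theorem two_mul_sum_antidiagonal_succ (a b W : ℕ) :
    2 * ∑ p ∈ antidiagonal (W + 1), (a + p.1 + 1)! * (b + p.2 + 1)! =
      (a + 1)! * (b + W + 2)! + (a + W + 2)! * (b + 1)! +
        (a + b + W + 4) * ∑ p ∈ antidiagonal W, (a + p.1 + 1)! * (b + p.2 + 1)! := by
  have hshift : ∑ p ∈ antidiagonal W, (a + (p.1 + 1) + 1)! * (b + p.2 + 1)! +
      ∑ p ∈ antidiagonal W, (a + p.1 + 1)! * (b + (p.2 + 1) + 1)! =
      (a + b + W + 4) * ∑ p ∈ antidiagonal W, (a + p.1 + 1)! * (b + p.2 + 1)! := by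
    rw [← sum_add_distrib, mul_sum]
    refine sum_congr rfl fun p hp => ?_
    rw [HasAntidiagonal.mem_antidiagonal] at hp
    rw [← hp, show a + (p.1 + 1) + 1 = (a + p.1 + 1) + 1 by ring,
      show b + (p.2 + 1) + 1 = (b + p.2 + 1) + 1 by ring, factorial_succ (a + p.1 + 1),
      factorial_succ (b + p.2 + 1)]
    ring
  rw [two_mul]
  nth_rewrite 1 [Nat.sum_antidiagonal_succ]
  rw [Nat.sum_antidiagonal_succ', ← hshift]
  simp only [add_zero]
  ring_nf

theorem factorial_mul_sum_antidiagonal_le (a b W : ℕ) :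
    (a + b + 1)! * ∑ p ∈ antidiagonal W, (a + p.1 + 1)! * (b + p.2 + 1)! ≤
      6 * ((a + 1)! * (b + 1)! * (a + b + W + 1)!) := by
  induction W with
  | zero =>
    simp only [Nat.antidiagonal_zero, sum_singleton, add_zero]
    rw [mul_comm]
    exact Nat.le_mul_of_pos_left _ (by norm_num)
  | succ W ih =>
    rcases Nat.eq_zero_or_pos (a + b + W) with h0 | hpos
    · obtain ⟨rfl, rfl, rfl⟩ : a = 0 ∧ b = 0 ∧ W = 0 := by omega
      decide
    have hends : (a + b + 1)! * ((a + 1)! * (b + W + 2)! + (a + W + 2)! * (b + 1)!) ≤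
        2 * ((a + 1)! * (b + 1)! * (a + b + (W + 1) + 1)!) := by
      have h₁ := factorial_mul_factorial_add_le (show b + 1 ≤ a + b + 1 by omega) (W + 1)
      have h₂ := factorial_mul_factorial_add_le (show a + 1 ≤ a + b + 1 by omega) (W + 1)
      rw [show a + b + 1 + (W + 1) = a + b + (W + 1) + 1 by ring] at h₁ h₂
      rw [show b + 1 + (W + 1) = b + W + 2 by ring] at h₁
      rw [show a + 1 + (W + 1) = a + W + 2 by ring] at h₂
      nlinarith [Nat.mul_le_mul_left (a + 1)! h₁, Nat.mul_le_mul_left (b + 1)! h₂]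
    have hsucc : (a + b + (W + 1) + 1)! = (a + b + W + 2) * (a + b + W + 1)! := factorial_succ _
    refine Nat.le_of_mul_le_mul_left ?_ two_pos
    calc 2 * ((a + b + 1)! * ∑ p ∈ antidiagonal (W + 1), (a + p.1 + 1)! * (b + p.2 + 1)!)
        = (a + b + 1)! * ((a + 1)! * (b + W + 2)! + (a + W + 2)! * (b + 1)!) +
            (a + b + W + 4) * ((a + b + 1)! * ∑ p ∈ antidiagonal W,
              (a + p.1 + 1)! * (b + p.2 + 1)!) := by
          rw [mul_left_comm, two_mul_sum_antidiagonal_succ]; ring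
      _ ≤ 2 * ((a + 1)! * (b + 1)! * (a + b + (W + 1) + 1)!) +
            (a + b + W + 4) * (6 * ((a + 1)! * (b + 1)! * (a + b + W + 1)!)) := by gcongr
      -- `(s + 2) * 6 ≤ 10 * s` for `s = a + b + W + 2` needs `s ≥ 3`, hence the split above.
      _ ≤ 2 * (6 * ((a + 1)! * (b + 1)! * (a + b + (W + 1) + 1)!)) := by
          rw [hsucc]
          nlinarith [Nat.mul_le_mul_right ((a + 1)! * (b + 1)! * (a + b + W + 1)!) hpos]

theorem sum_antidiagonalTuple_succ {M : Type*} [AddCommMonoid M] (k n : ℕ)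
    (f : (Fin (k + 1) → ℕ) → M) :
    ∑ x ∈ Nat.antidiagonalTuple (k + 1) n, f x =
      ∑ p ∈ antidiagonal n, ∑ y ∈ Nat.antidiagonalTuple k p.2, f (Fin.cons p.1 y) := by
  simp only [Finset.sum, Nat.antidiagonalTuple, Multiset.Nat.antidiagonalTuple,
    List.Nat.antidiagonalTuple, HasAntidiagonal.antidiagonal, Multiset.Nat.antidiagonal]
  simp [List.flatMap_def, List.sum_flatten, Function.comp_def]

theorem factorial_mul_sum_antidiagonalTuple_le {r : ℕ} (d : Fin r → ℕ) (W : ℕ) :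
    (∑ i, d i + 1)! * ∑ C ∈ Nat.antidiagonalTuple r W, ∏ i, (d i + C i + 1)! ≤
      6 ^ r * ((∑ i, d i + W + 1)! * ∏ i, (d i + 1)!) := by
  induction r generalizing W with
  | zero => cases W <;> simp
  | succ k ih =>
    induction d using Fin.consCases with
    | cons d₀ d =>
      simp only [sum_antidiagonalTuple_succ, Fin.sum_cons, Fin.prod_univ_succ, Fin.cons_zero,
        Fin.cons_succ, ← mul_sum]
      set D := ∑ i, d i
      set P := ∏ i, (d i + 1)!
      refine Nat.le_of_mul_le_mul_left ?_ (factorial_pos (D + 1))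
      calc (D + 1)! * ((d₀ + D + 1)! * ∑ p ∈ antidiagonal W,
            (d₀ + p.1 + 1)! * ∑ y ∈ Nat.antidiagonalTuple k p.2, ∏ i, (d i + y i + 1)!)
          = (d₀ + D + 1)! * ∑ p ∈ antidiagonal W, (d₀ + p.1 + 1)! *
              ((D + 1)! * ∑ y ∈ Nat.antidiagonalTuple k p.2, ∏ i, (d i + y i + 1)!) := by
            rw [mul_left_comm, mul_sum]
            exact congrArg _ (sum_congr rfl fun p _ => mul_left_comm _ _ _)
        _ ≤ (d₀ + D + 1)! * ∑ p ∈ antidiagonal W,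
              (d₀ + p.1 + 1)! * (6 ^ k * ((D + p.2 + 1)! * P)) :=
            Nat.mul_le_mul_left _ (sum_le_sum fun p _ => Nat.mul_le_mul_left _ (ih d p.2))
        _ = 6 ^ k * P * ((d₀ + D + 1)! *
              ∑ p ∈ antidiagonal W, (d₀ + p.1 + 1)! * (D + p.2 + 1)!) := by
            simp only [mul_sum]
            exact sum_congr rfl fun p _ => by ring
        _ ≤ 6 ^ k * P * (6 * ((d₀ + 1)! * (D + 1)! * (d₀ + D + W + 1)!)) :=
            Nat.mul_le_mul_left _ (factorial_mul_sum_antidiagonal_le d₀ D W)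
        _ = (D + 1)! * (6 ^ (k + 1) * ((d₀ + D + W + 1)! * ((d₀ + 1)! * P))) := by ring

theorem factorial_mul_sum_sum_antidiagonalTuple_le {ι : Type*} {r D : ℕ} (s : Finset ι)
    (d : ι → Fin r → ℕ) (hd : ∀ j ∈ s, ∑ i, d j i = D) (W : ℕ) :
    (D + 1)! * ∑ j ∈ s, ∑ C ∈ Nat.antidiagonalTuple r W, ∏ i, (d j i + C i + 1)! ≤
      6 ^ r * ((D + W + 1)! * ∑ j ∈ s, ∏ i, (d j i + 1)!) := by
  rw [mul_sum, mul_sum, mul_sum]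
  exact sum_le_sum fun j hj => hd j hj ▸ factorial_mul_sum_antidiagonalTuple_le (d j) W

theorem stmt_10_general (r U V W : ℕ) :
    ∑ A ∈ Finset.Nat.antidiagonalTuple r U,
      ∑ B ∈ Finset.Nat.antidiagonalTuple r V,
        ∑ C ∈ Finset.Nat.antidiagonalTuple r W,
          ∏ i, Nat.factorial (A i + B i + C i + 1)
      ≤ 2 ^ (8 * r + 9) * Nat.factorial (U + V + W + 1) := by
  have hsum {n : ℕ} {A : Fin r → ℕ} (hA : A ∈ Nat.antidiagonalTuple r n) : ∑ i, A i = n :=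
    Nat.mem_antidiagonalTuple.mp hA
  have h₁ := factorial_mul_sum_sum_antidiagonalTuple_le
    (Nat.antidiagonalTuple r U ×ˢ Nat.antidiagonalTuple r V) (fun x i => x.1 i + x.2 i)
    (D := U + V) (fun x hx => by
      rw [mem_product] at hx
      rw [sum_add_distrib, hsum hx.1, hsum hx.2]) W
  have h₂ := factorial_mul_sum_sum_antidiagonalTuple_le (Nat.antidiagonalTuple r U) id
    (fun _ => hsum) V
  have h₃ := factorial_mul_sum_antidiagonalTuple_le (0 : Fin r → ℕ) U
  simp only [sum_product, id] at h₁ h₂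
  simp only [Pi.zero_apply, sum_const_zero, zero_add, factorial_one, one_mul, prod_const_one,
    mul_one] at h₃
  have h216 : 6 ^ r * 6 ^ r * 6 ^ r ≤ 2 ^ (8 * r + 9) :=
    calc 6 ^ r * 6 ^ r * 6 ^ r = 216 ^ r := by rw [← mul_pow, ← mul_pow]; norm_num
      _ ≤ 256 ^ r := Nat.pow_le_pow_left (by norm_num) r
      _ ≤ 2 ^ (8 * r + 9) := by
          rw [pow_add, pow_mul]; exact Nat.le_mul_of_pos_right _ (by norm_num)
  refine le_trans ?_ (Nat.mul_le_mul_right _ h216)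
  refine Nat.le_of_mul_le_mul_left ?_
    (mul_pos (factorial_pos (U + 1)) (factorial_pos (U + V + 1)))
  linarith [Nat.mul_le_mul_left (U + 1)! h₁, Nat.mul_le_mul_left (6 ^ r * (U + V + W + 1)!) h₂,
    Nat.mul_le_mul_left (6 ^ r * (U + V + W + 1)! * 6 ^ r * (U + V + 1)!) h₃]

theorem stmt_10 (r U V W : ℕ) (hr : 0 < r) :
    ∑ A ∈ Finset.Nat.antidiagonalTuple r U,
      ∑ B ∈ Finset.Nat.antidiagonalTuple r V,
        ∑ C ∈ Finset.Nat.antidiagonalTuple r W,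
          ∏ i, Nat.factorial (A i + B i + C i + 1)
      ≤ 2 ^ (8 * r + 9) * Nat.factorial (U + V + W + 1) :=
  stmt_10_general r U V W
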